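/- Let M be a symmetric positive semidefinite d x d matrix, pi in (0,1), and a0, a1, b0, b1 vectors in R^d. Define Q(a1, a0) = (1/pi)(a1 - b1)^T M (a1 - b1) + (1/(1-pi))(a0 - b0)^T M (a0 - b0) - (a1 - b1 - a0 + b0)^T M (a1 - b1 - a0 + b0). Then Q(a1, a0) = (1/(pi(1-pi))) u^T M u where u = (1-pi)(a1 - b1) + pi(a0 - b0), and hence Q(a1, a0) >= 0 with equality iff u^T M u = 0. -/

import Mathlib

open Matrix

/-- the excess asymptotic variance Q(a1,a0) equals
(1/(π(1-π))) uᵀ M u with u = (1-π)(a1-b1) + π(a0-b0), hence Q ≥ 0,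
with Q = 0 iff uᵀ M u = 0. -/
theorem stmt_17 {d : ℕ} (M : Matrix (Fin d) (Fin d) ℝ) (hM : M.PosSemidef)
    (π : ℝ) (hπ0 : 0 < π) (hπ1 : π < 1)
    (a0 a1 b0 b1 : Fin d → ℝ)
    (Q : ℝ)
    (hQ : Q = (1 / π) * ((a1 - b1) ⬝ᵥ M.mulVec (a1 - b1))
        + (1 / (1 - π)) * ((a0 - b0) ⬝ᵥ M.mulVec (a0 - b0))
        - ((a1 - b1 - a0 + b0) ⬝ᵥ M.mulVec (a1 - b1 - a0 + b0)))
    (u : Fin d → ℝ)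
    (hu : u = (1 - π) • (a1 - b1) + π • (a0 - b0)) :
    Q = (1 / (π * (1 - π))) * (u ⬝ᵥ M.mulVec u) ∧
    0 ≤ Q ∧
    (Q = 0 ↔ u ⬝ᵥ M.mulVec u = 0) := by
  have hπ1' : (0:ℝ) < 1 - π := by linarith
  set x := a1 - b1 with hx
  set y := a0 - b0 with hy
  have hxy : a1 - b1 - a0 + b0 = x - y := by
    simp [hx, hy]; abel
  have hsym : y ⬝ᵥ M.mulVec x = x ⬝ᵥ M.mulVec y := by
    have hT : Mᵀ = M := (by simpa using hM.isHermitian : M.IsSymm)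
    rw [dotProduct_mulVec, ← mulVec_transpose, hT, dotProduct_comm]
  have hkey : Q = (1 / (π * (1 - π))) * (u ⬝ᵥ M.mulVec u) := by
    rw [hQ, hxy, hu]
    simp only [mulVec_add, mulVec_smul, dotProduct_add, add_dotProduct, smul_dotProduct,
      dotProduct_smul, sub_dotProduct, dotProduct_sub, mulVec_sub, smul_eq_mul]
    rw [hsym]
    field_simp
    ring
  have hnn : 0 ≤ u ⬝ᵥ M.mulVec u := by simpa using hM.dotProduct_mulVec_nonneg u
  have hpos : 0 < 1 / (π * (1 - π)) := by positivity
  refine ⟨hkey, ?_, ?_⟩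
  · rw [hkey]; positivity
  · rw [hkey]
    constructor
    · intro h
      rcases mul_eq_zero.mp h with h | h
      · exact absurd h (ne_of_gt hpos)
      · exact h
    · intro h; rw [h, mul_zero]
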